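/- arXiv:1404.4068 — 6 statements merged into one kernel-verified Lean document; each statement's English description precedes it below -/
import Mathlib

section
/- If φ : (0,∞) → ℝ is differentiable, satisfies 0 < φ(s) < 1, and solves φ'(s) = (1/(2s)) (φ(s)² − 1) φ(s) for all s > 0, with lim_{s→0⁺} φ(s) = 1 and lim_{s→0⁺} (1−φ(s))/s finite and positive with value C/2, then φ(s) = (1 + Cs)^{-1/2} for all s > 0. -/
open MeasureTheory Real Set Filter

/-
The equation φ' = (φ² − 1) φ / (2s) is separable, with first integral (φ⁻² − 1)/s: along any
solution its derivative vanishes, so it is constant on (0, ∞). Writing it as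
((1 − φ)/s) · ((1 + φ)/φ²) shows that its limit at 0⁺ is (C/2) · 2 = C, hence φ(s)⁻² = 1 + Cs.
-/

noncomputable def firstIntegral (φ : ℝ → ℝ) (s : ℝ) : ℝ :=
  ((φ s ^ 2)⁻¹ - 1) / s

theorem hasDerivAt_firstIntegral {φ : ℝ → ℝ} {s : ℝ}
    (hφ : HasDerivAt φ ((1 / (2 * s)) * (φ s ^ 2 - 1) * φ s) s) (hφs : φ s ≠ 0) (hs : s ≠ 0) :
    HasDerivAt (firstIntegral φ) 0 s := by
  have h := (((hφ.pow 2).inv (pow_ne_zero 2 hφs)).sub_const 1).div (hasDerivAt_id s) hs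
  simp only [Pi.pow_apply, Pi.inv_apply, id] at h
  refine h.congr_deriv ?_
  field_simp
  ring

theorem tendsto_firstIntegral {φ : ℝ → ℝ} {l : Filter ℝ} {L : ℝ}
    (h₁ : Tendsto φ l (nhds 1)) (h₂ : Tendsto (fun s => (1 - φ s) / s) l (nhds L)) :
    Tendsto (firstIntegral φ) l (nhds (2 * L)) := by
  have hφ : Tendsto (fun s => (1 + φ s) / φ s ^ 2) l (nhds 2) := by
    convert ((tendsto_const_nhds (x := (1 : ℝ))).add h₁).div (h₁.pow 2) (by norm_num) using 2 <;>
      norm_num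
  have hne : ∀ᶠ s in l, φ s ≠ 0 := h₁.eventually_ne one_ne_zero
  refine ((h₂.mul hφ).congr' ?_).trans (by rw [mul_comm])
  filter_upwards [hne] with s hs
  rw [firstIntegral]
  rcases eq_or_ne s 0 with rfl | hs0
  · simp
  · field_simp
    ring

theorem eqOn_Ioi_of_hasDerivAt_zero_of_tendsto {E : Type*} [NormedAddCommGroup E]
    [NormedSpace ℝ E] {f : ℝ → E} {a : ℝ} {c : E} (hf : ∀ x ∈ Ioi a, HasDerivAt f 0 x)
    (hlim : Tendsto f (nhdsWithin a (Ioi a)) (nhds c)) : EqOn f (fun _ => c) (Ioi a) := by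
  intro x hx
  have hconst : EqOn f (fun _ => f x) (Ioi a) := fun y hy =>
    isOpen_Ioi.is_const_of_deriv_eq_zero isPreconnected_Ioi
      (fun z hz => (hf z hz).differentiableAt.differentiableWithinAt)
      (fun z hz => (hf z hz).deriv) hy hx
  exact tendsto_nhds_unique
    (tendsto_const_nhds.congr' (eventuallyEq_nhdsWithin_of_eqOn hconst).symm) hlim

theorem eq_rpow_neg_half_of_firstIntegral_eq {φ : ℝ → ℝ} {C s : ℝ} (hs : 0 < s)
    (hφs : 0 < φ s) (h : firstIntegral φ s = C) : φ s = (1 + C * s) ^ (-(1 / 2 : ℝ)) := by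
  have hsq : (φ s ^ 2)⁻¹ = 1 + C * s := by
    rw [firstIntegral, div_eq_iff hs.ne'] at h
    linarith
  rw [← hsq, ← rpow_natCast, ← rpow_neg_one, ← rpow_mul (by positivity), ← rpow_mul hφs.le]
  norm_num

theorem ode_unique_solution_general (C : ℝ) (φ : ℝ → ℝ)
    (hderiv : ∀ s : ℝ, 0 < s →
      HasDerivAt φ ((1 / (2 * s)) * ((φ s) ^ 2 - 1) * φ s) s)
    (hbound : ∀ s : ℝ, 0 < s → 0 < φ s ∧ φ s < 1)
    (hlim1 : Tendsto φ (nhdsWithin 0 (Ioi 0)) (nhds 1))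
    (hlim2 : Tendsto (fun s => (1 - φ s) / s) (nhdsWithin 0 (Ioi 0)) (nhds (C / 2))) :
    ∀ s : ℝ, 0 < s → φ s = (1 + C * s) ^ (-(1/2 : ℝ)) := by
  have hconst : EqOn (firstIntegral φ) (fun _ => C) (Ioi 0) := by
    refine eqOn_Ioi_of_hasDerivAt_zero_of_tendsto
      (fun s hs => hasDerivAt_firstIntegral (hderiv s hs) (hbound s hs).1.ne' hs.ne') ?_
    simpa [mul_div_cancel₀] using tendsto_firstIntegral hlim1 hlim2
  intro s hs
  exact eq_rpow_neg_half_of_firstIntegral_eq hs (hbound s hs).1 (hconst hs)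

theorem ode_unique_solution (C : ℝ) (hC : 0 < C) (φ : ℝ → ℝ)
    (hderiv : ∀ s : ℝ, 0 < s →
      HasDerivAt φ ((1 / (2 * s)) * ((φ s) ^ 2 - 1) * φ s) s)
    (hbound : ∀ s : ℝ, 0 < s → 0 < φ s ∧ φ s < 1)
    (hlim1 : Tendsto φ (nhdsWithin 0 (Ioi 0)) (nhds 1))
    (hlim2 : Tendsto (fun s => (1 - φ s) / s) (nhdsWithin 0 (Ioi 0)) (nhds (C / 2))) :
    ∀ s : ℝ, 0 < s → φ s = (1 + C * s) ^ (-(1/2 : ℝ)) :=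
  ode_unique_solution_general C φ hderiv hbound hlim1 hlim2
end

section
/- For a nonnegative integrable function p on (0,∞) with ∫₀^∞ p = 1, the Laplace transform of x ↦ ∫_x^∞ (1/u) p(u) du at s > 0 equals (1/s) ∫₀^s p̂(s') ds', where p̂ is the Laplace transform of p, provided ∫₀^∞ (1/u) p(u) du < ∞. -/
open MeasureTheory Real Set

/-! Both sides equal `(1 / s) * ∫ u in Ioi 0, (1 - exp (-(s * u))) * (p u / u)`: on the left, swap the
integrals over the triangle `0 < x < u`; on the right, swap the `s'`- and `x`-integrals, which is
legitimate because `|exp (-(s' * x)) * p x| ≤ |p x|` on `Ioc 0 s × Ioi 0`. -/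

lemma integral_exp_neg_mul_of_ne_zero {s : ℝ} (hs : s ≠ 0) (u : ℝ) :
    ∫ x in (0:ℝ)..u, exp (-(s * x)) = (1 - exp (-(s * u))) / s := by
  simp_rw [← neg_mul]
  rw [intervalIntegral.integral_comp_mul_left exp (neg_ne_zero.mpr hs), integral_exp]
  simp only [smul_eq_mul, mul_zero, exp_zero]
  field_simp
  ring

theorem integral_mul_tail_eq_integral_primitive_mul {f g : ℝ → ℝ} {a : ℝ}
    (hf : IntegrableOn f (Ioi a)) (hg : IntegrableOn g (Ioi a)) :
    ∫ x in Ioi a, g x * ∫ u in Ioi x, f u = ∫ u in Ioi a, (∫ x in a..u, g x) * f u := by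
  set μ := volume.restrict (Ioi a)
  set F : ℝ → ℝ → ℝ := fun x u => {z : ℝ × ℝ | z.1 < z.2}.indicator (fun z => g z.1 * f z.2) (x, u)
  have hF : Integrable (Function.uncurry F) (μ.prod μ) :=
    (hg.mul_prod hf).indicator (measurableSet_lt measurable_fst measurable_snd)
  calc ∫ x in Ioi a, g x * ∫ u in Ioi x, f u = ∫ x, ∫ u, F x u ∂μ ∂μ := by
        refine setIntegral_congr_fun measurableSet_Ioi fun x (hx : a < x) => ?_
        have : F x = (Ioi x).indicator fun u => g x * f u := by ext u; simp [F, indicator_apply]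
        rw [this, integral_indicator measurableSet_Ioi, Measure.restrict_restrict measurableSet_Ioi,
          inter_eq_left.mpr (Ioi_subset_Ioi hx.le), integral_const_mul]
    _ = ∫ u, ∫ x, F x u ∂μ ∂μ := integral_integral_swap hF
    _ = ∫ u in Ioi a, (∫ x in a..u, g x) * f u := by
        refine setIntegral_congr_fun measurableSet_Ioi fun u (hu : a < u) => ?_
        have : (F · u) = (Iio u).indicator fun x => g x * f u := by ext x; simp [F, indicator_apply]
        rw [this, integral_indicator measurableSet_Iio, Measure.restrict_restrict measurableSet_Iio,
          Iio_inter_Ioi, integral_mul_const, intervalIntegral.integral_of_le hu.le,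
          integral_Ioc_eq_integral_Ioo]

theorem intervalIntegral_laplace_swap {p : ℝ → ℝ} (hp : IntegrableOn p (Ioi 0)) {s : ℝ} (hs : 0 ≤ s) :
    ∫ t in (0:ℝ)..s, ∫ x in Ioi 0, exp (-(t * x)) * p x
      = ∫ x in Ioi 0, (∫ t in (0:ℝ)..s, exp (-(t * x))) * p x := by
  set μ := volume.restrict (Ioi (0:ℝ))
  set ν := volume.restrict (Ioc 0 s)
  have hmem : ∀ᵐ z ∂(ν.prod μ), z ∈ Ioc 0 s ×ˢ Ioi 0 := by
    rw [Measure.prod_restrict]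
    exact ae_restrict_mem (measurableSet_Ioc.prod measurableSet_Ioi)
  have hG : Integrable (fun z : ℝ × ℝ => exp (-(z.1 * z.2)) * p z.2) (ν.prod μ) := by
    refine Integrable.mono (by simpa using (integrable_const (1:ℝ)).mul_prod hp)
      ((by fun_prop : Continuous fun z : ℝ × ℝ => exp (-(z.1 * z.2))).aestronglyMeasurable.mul
        hp.1.comp_snd) ?_
    filter_upwards [hmem] with z ⟨⟨hz₁, _⟩, hz₂⟩
    rw [norm_mul, norm_of_nonneg (exp_pos _).le]
    exact mul_le_of_le_one_left (norm_nonneg _)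
      (exp_le_one_iff.mpr (neg_nonpos.mpr (mul_pos hz₁ hz₂).le))
  simp_rw [intervalIntegral.integral_of_le hs, ← integral_mul_const]
  exact integral_integral_swap (f := fun t x => exp (-(t * x)) * p x) hG

theorem laplace_of_tail_integral_general (p : ℝ → ℝ)
    (hint : IntegrableOn p (Ioi 0))
    (hquot : IntegrableOn (fun u => p u / u) (Ioi 0)) :
    ∀ s : ℝ, 0 < s →
      ∫ x in Ioi (0:ℝ), Real.exp (-(s * x)) * (∫ u in Ioi x, p u / u)
        = (1 / s) * ∫ s' in (0:ℝ)..s, ∫ x in Ioi (0:ℝ), Real.exp (-(s' * x)) * p x := by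
  intro s hs
  have hexp : IntegrableOn (fun x => exp (-(s * x))) (Ioi 0) := by
    simpa [neg_mul] using exp_neg_integrableOn_Ioi 0 hs
  rw [integral_mul_tail_eq_integral_primitive_mul hquot hexp, intervalIntegral_laplace_swap hint hs.le,
    ← integral_const_mul]
  refine setIntegral_congr_fun measurableSet_Ioi fun u (hu : 0 < u) => ?_
  simp_rw [mul_comm _ u]
  rw [integral_exp_neg_mul_of_ne_zero hs.ne', integral_exp_neg_mul_of_ne_zero hu.ne', mul_comm u s]
  field_simp

theorem laplace_of_tail_integral (p : ℝ → ℝ)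
    (hint : IntegrableOn p (Ioi 0))
    (hpos : ∀ᵐ x ∂(volume.restrict (Ioi (0:ℝ))), 0 ≤ p x)
    (hone : ∫ x in Ioi (0:ℝ), p x = 1)
    (hquot : IntegrableOn (fun u => p u / u) (Ioi 0)) :
    ∀ s : ℝ, 0 < s →
      ∫ x in Ioi (0:ℝ), Real.exp (-(s * x)) * (∫ u in Ioi x, p u / u)
        = (1 / s) * ∫ s' in (0:ℝ)..s, ∫ x in Ioi (0:ℝ), Real.exp (-(s' * x)) * p x :=
  laplace_of_tail_integral_general p hint hquot
end

section
/- For a probability density p on (0,∞) with ∫₀^∞ p(u)/u du < ∞, the Laplace transform of T[p], where T[p](x) = (1/2)∫₀^x p(x−u) ∫_u^∞ (1/v) p(v) dv du + (1/2)∫_x^∞ (1/u) p(u) du, equals (1/(2s)) (p̂(s) + 1) ∫₀^s p̂(s') ds' for all s > 0. -/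
/-!
With `Q u = ∫_{v > u} p v / v`, the operator is `T[p] = ½ (p ∗ Q) + ½ Q`, where `∗` is the
convolution of functions supported on `(0, ∞)`. Since `e^{-sx} = e^{-su} e^{-s(x-u)}`, damping by
`e^{-sx}` commutes with convolution, so `L[p ∗ Q] = L[p] L[Q]`. Fubini, together with
`∫_0^s e^{-s'v} ds' = (1 - e^{-sv}) / v`, gives
`s L[Q](s) = ∫_{v > 0} (1 - e^{-sv}) p v / v = ∫_0^s L[p]`.
-/

open MeasureTheory Real Set
open scoped Convolution

noncomputable def T (p : ℝ → ℝ) (x : ℝ) : ℝ :=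
  (1/2) * (∫ u in (0:ℝ)..x, p (x - u) * ∫ v in Ioi u, p v / v)
    + (1/2) * ∫ u in Ioi x, p u / u

noncomputable def laplace (p : ℝ → ℝ) (s : ℝ) : ℝ :=
  ∫ x in Ioi (0:ℝ), Real.exp (-(s * x)) * p x

theorem integral_exp_neg_mul {c : ℝ} (hc : c ≠ 0) (b : ℝ) :
    ∫ t in (0:ℝ)..b, exp (-(c * t)) = (1 - exp (-(c * b))) / c := by
  simp_rw [← neg_mul]
  rw [intervalIntegral.integral_comp_mul_left (fun t => exp t) (neg_ne_zero.2 hc), integral_exp]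
  simp only [mul_zero, exp_zero, smul_eq_mul]
  field_simp
  ring

section Fubini

variable {α β : Type*} [MeasurableSpace α] [MeasurableSpace β] {μ : Measure α} {ν : Measure β}
  {φ : α → β → ℝ} {ψ : β → ℝ} {k : α → ℝ}

theorem integrable_prod_mul_of_norm_le
    (hφ : AEStronglyMeasurable (Function.uncurry φ) (μ.prod ν))
    (hk : Integrable k μ) (hψ : Integrable ψ ν) (hφk : ∀ᵐ z ∂μ.prod ν, ‖φ z.1 z.2‖ ≤ k z.1) :
    Integrable (fun z : α × β => φ z.1 z.2 * ψ z.2) (μ.prod ν) := by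
  refine (hk.mul_prod hψ.norm).mono' (hφ.mul hψ.1.comp_snd) ?_
  filter_upwards [hφk] with z hz
  rw [norm_mul]
  exact mul_le_mul_of_nonneg_right hz (norm_nonneg _)

theorem integral_integral_mul_swap [SFinite μ] [SFinite ν]
    (hφ : AEStronglyMeasurable (Function.uncurry φ) (μ.prod ν))
    (hk : Integrable k μ) (hψ : Integrable ψ ν) (hφk : ∀ᵐ z ∂μ.prod ν, ‖φ z.1 z.2‖ ≤ k z.1) :
    ∫ a, ∫ b, φ a b * ψ b ∂ν ∂μ = ∫ b, (∫ a, φ a b ∂μ) * ψ b ∂ν := by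
  rw [integral_integral_swap (integrable_prod_mul_of_norm_le hφ hk hψ hφk)]
  simp_rw [integral_mul_const]

end Fubini

noncomputable def laplaceIntegrand (f : ℝ → ℝ) (s : ℝ) : ℝ → ℝ :=
  (Ioi 0).indicator fun x => exp (-(s * x)) * f x

theorem laplace_eq_integral_laplaceIntegrand (f : ℝ → ℝ) (s : ℝ) :
    laplace f s = ∫ x, laplaceIntegrand f s x :=
  (integral_indicator measurableSet_Ioi).symm

theorem integrable_laplaceIntegrand_iff {f : ℝ → ℝ} {s : ℝ} :
    Integrable (laplaceIntegrand f s) ↔ IntegrableOn (fun x => exp (-(s * x)) * f x) (Ioi 0) :=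
  integrable_indicator_iff measurableSet_Ioi

theorem laplace_const_mul_add_const_mul {f g : ℝ → ℝ} {s : ℝ} (a b : ℝ)
    (hf : IntegrableOn (fun x => exp (-(s * x)) * f x) (Ioi 0))
    (hg : IntegrableOn (fun x => exp (-(s * x)) * g x) (Ioi 0)) :
    laplace (fun x => a * f x + b * g x) s = a * laplace f s + b * laplace g s := by
  simp_rw [laplace, mul_add, mul_left_comm _ a, mul_left_comm _ b]
  rw [integral_add (hf.const_mul a) (hg.const_mul b), integral_const_mul, integral_const_mul]

theorem integrableOn_exp_neg_mul {s : ℝ} (hs : 0 < s) :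
    IntegrableOn (fun x => exp (-(s * x))) (Ioi 0) := by
  simpa only [neg_mul] using exp_neg_integrableOn_Ioi 0 hs

theorem MeasureTheory.IntegrableOn.exp_neg_mul {f : ℝ → ℝ} (hf : IntegrableOn f (Ioi 0))
    {s : ℝ} (hs : 0 ≤ s) :
    IntegrableOn (fun x => exp (-(s * x)) * f x) (Ioi 0) := by
  refine hf.bdd_mul (c := 1) (by fun_prop) ?_
  filter_upwards [ae_restrict_mem measurableSet_Ioi] with x (hx : 0 < x)
  rw [norm_of_nonneg (exp_pos _).le, exp_le_one_iff, neg_nonpos]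
  positivity

theorem laplaceIntegrand_intervalConvolution (f g : ℝ → ℝ) (s : ℝ) :
    laplaceIntegrand (fun x => ∫ u in (0:ℝ)..x, f (x - u) * g u) s
      = laplaceIntegrand g s ⋆[ContinuousLinearMap.mul ℝ ℝ] laplaceIntegrand f s := by
  ext x
  have hsupp : ∀ u, laplaceIntegrand g s u * laplaceIntegrand f s (x - u)
      = (Ioo 0 x).indicator (fun u => exp (-(s * x)) * (f (x - u) * g u)) u := by
    intro u
    by_cases hu : 0 < u <;> by_cases hxu : u < x
    · simp only [laplaceIntegrand, indicator, mem_Ioi, mem_Ioo, hu, hxu, sub_pos, and_self,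
        if_true]
      rw [mul_mul_mul_comm, ← exp_add]
      ring_nf
    all_goals simp [laplaceIntegrand, indicator, hu, hxu]
  simp only [convolution_def, ContinuousLinearMap.mul_apply', hsupp,
    integral_indicator measurableSet_Ioo]
  by_cases hx : 0 < x
  · rw [laplaceIntegrand, indicator_of_mem (mem_Ioi.2 hx), intervalIntegral.integral_of_le hx.le,
      integral_Ioc_eq_integral_Ioo, integral_const_mul]
  · rw [laplaceIntegrand, indicator_of_notMem (notMem_Ioi.2 (not_lt.1 hx)), Ioo_eq_empty hx,
      Measure.restrict_empty, integral_zero_measure]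

section IntervalConvolution

variable {f g : ℝ → ℝ} {s : ℝ}

theorem integrableOn_exp_neg_mul_intervalConvolution
    (hf : IntegrableOn (fun x => exp (-(s * x)) * f x) (Ioi 0))
    (hg : IntegrableOn (fun x => exp (-(s * x)) * g x) (Ioi 0)) :
    IntegrableOn (fun x => exp (-(s * x)) * ∫ u in (0:ℝ)..x, f (x - u) * g u) (Ioi 0) := by
  rw [← integrable_laplaceIntegrand_iff, laplaceIntegrand_intervalConvolution]
  exact (integrable_laplaceIntegrand_iff.2 hg).integrable_convolution _
    (integrable_laplaceIntegrand_iff.2 hf)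

theorem laplace_intervalConvolution
    (hf : IntegrableOn (fun x => exp (-(s * x)) * f x) (Ioi 0))
    (hg : IntegrableOn (fun x => exp (-(s * x)) * g x) (Ioi 0)) :
    laplace (fun x => ∫ u in (0:ℝ)..x, f (x - u) * g u) s = laplace f s * laplace g s := by
  rw [laplace_eq_integral_laplaceIntegrand, laplaceIntegrand_intervalConvolution,
    integral_convolution _ (integrable_laplaceIntegrand_iff.2 hg)
      (integrable_laplaceIntegrand_iff.2 hf),
    ContinuousLinearMap.mul_apply', ← laplace_eq_integral_laplaceIntegrand,
    ← laplace_eq_integral_laplaceIntegrand, mul_comm]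

end IntervalConvolution

theorem intervalIntegral_laplace {p : ℝ → ℝ} (hp : IntegrableOn p (Ioi 0)) {s : ℝ}
    (hs : 0 ≤ s) :
    ∫ s' in (0:ℝ)..s, laplace p s' = ∫ x in Ioi 0, (1 - exp (-(s * x))) * (p x / x) := by
  have hbound : ∀ᵐ z ∂(volume.restrict (Ioc 0 s)).prod (volume.restrict (Ioi 0)),
      ‖exp (-(z.1 * z.2))‖ ≤ (1 : ℝ) := by
    rw [Measure.prod_restrict]
    filter_upwards [ae_restrict_mem (measurableSet_Ioc.prod measurableSet_Ioi)] with z hz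
    rw [norm_of_nonneg (exp_pos _).le, exp_le_one_iff, neg_nonpos]
    exact mul_nonneg hz.1.1.le (le_of_lt hz.2)
  rw [intervalIntegral.integral_of_le hs]
  refine (integral_integral_mul_swap (φ := fun s' x => exp (-(s' * x))) (by fun_prop)
    (integrable_const 1) hp hbound).trans (setIntegral_congr_fun measurableSet_Ioi fun x hx => ?_)
  rw [← intervalIntegral.integral_of_le hs]
  simp_rw [mul_comm _ x]
  rw [integral_exp_neg_mul (ne_of_gt hx)]
  ring

noncomputable def tailKernel (s : ℝ) : ℝ × ℝ → ℝ :=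
  {z | z.1 < z.2}.indicator fun z => exp (-(s * z.1))

theorem measurable_tailKernel (s : ℝ) : Measurable (tailKernel s) :=
  Measurable.indicator (by fun_prop) (measurableSet_lt measurable_fst measurable_snd)

theorem norm_tailKernel_le (s : ℝ) (z : ℝ × ℝ) : ‖tailKernel s z‖ ≤ exp (-(s * z.1)) := by
  by_cases hz : z.1 < z.2 <;> simp [tailKernel, hz, (exp_pos _).le]

theorem setIntegral_tailKernel_mul (s : ℝ) (h : ℝ → ℝ) {x : ℝ} (hx : 0 < x) :
    ∫ v in Ioi 0, tailKernel s (x, v) * h v = exp (-(s * x)) * ∫ v in Ioi x, h v := by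
  have hKx : ∀ v, tailKernel s (x, v) * h v
      = (Ioi x).indicator (fun v => exp (-(s * x)) * h v) v := by
    intro v
    by_cases hv : x < v <;> simp [tailKernel, hv]
  simp_rw [hKx]
  rw [setIntegral_indicator measurableSet_Ioi,
    inter_eq_self_of_subset_right (Ioi_subset_Ioi hx.le), integral_const_mul]

theorem setIntegral_tailKernel {s : ℝ} (hs : s ≠ 0) {v : ℝ} (hv : 0 < v) :
    ∫ x in Ioi 0, tailKernel s (x, v) = (1 - exp (-(s * v))) / s := by
  have hKv : ∀ x, tailKernel s (x, v) = (Iio v).indicator (fun x => exp (-(s * x))) x := by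
    intro x
    by_cases hx : x < v <;> simp [tailKernel, hx]
  simp_rw [hKv]
  rw [setIntegral_indicator measurableSet_Iio, Ioi_inter_Iio, ← integral_Ioc_eq_integral_Ioo,
    ← intervalIntegral.integral_of_le hv.le, integral_exp_neg_mul hs]

section Tail

variable {h : ℝ → ℝ} {s : ℝ}

theorem integrable_tailKernel_mul (hh : IntegrableOn h (Ioi 0)) (hs : 0 < s) :
    Integrable (fun z : ℝ × ℝ => tailKernel s z * h z.2)
      ((volume.restrict (Ioi 0)).prod (volume.restrict (Ioi 0))) :=
  integrable_prod_mul_of_norm_le (φ := fun x v => tailKernel s (x, v))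
    (measurable_tailKernel s).aestronglyMeasurable (integrableOn_exp_neg_mul hs) hh
    (ae_of_all _ (norm_tailKernel_le s))

theorem integrableOn_exp_neg_mul_integral_Ioi (hh : IntegrableOn h (Ioi 0)) (hs : 0 < s) :
    IntegrableOn (fun x => exp (-(s * x)) * ∫ v in Ioi x, h v) (Ioi 0) :=
  IntegrableOn.congr_fun (integrable_tailKernel_mul hh hs).integral_prod_left
    (fun _ hx => setIntegral_tailKernel_mul s h hx) measurableSet_Ioi

theorem laplace_integral_Ioi (hh : IntegrableOn h (Ioi 0)) (hs : 0 < s) :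
    laplace (fun x => ∫ v in Ioi x, h v) s = (∫ v in Ioi 0, (1 - exp (-(s * v))) * h v) / s :=
  calc laplace (fun x => ∫ v in Ioi x, h v) s
      = ∫ x in Ioi 0, ∫ v in Ioi 0, tailKernel s (x, v) * h v :=
        (setIntegral_congr_fun measurableSet_Ioi fun _ hx =>
          setIntegral_tailKernel_mul s h hx).symm
    _ = ∫ v in Ioi 0, (∫ x in Ioi 0, tailKernel s (x, v)) * h v :=
        integral_integral_mul_swap (φ := fun x v => tailKernel s (x, v))
          (measurable_tailKernel s).aestronglyMeasurable (integrableOn_exp_neg_mul hs) hh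
          (ae_of_all _ (norm_tailKernel_le s))
    _ = ∫ v in Ioi 0, ((1 - exp (-(s * v))) * h v) / s :=
        setIntegral_congr_fun measurableSet_Ioi fun _ hv => by
          rw [setIntegral_tailKernel hs.ne' hv, div_mul_eq_mul_div]
    _ = _ := integral_div _ _

end Tail

theorem laplace_of_T_general (p : ℝ → ℝ)
    (hint : IntegrableOn p (Ioi 0))
    (hquot : IntegrableOn (fun u => p u / u) (Ioi 0)) :
    ∀ s : ℝ, 0 < s →
      laplace (T p) s = (1 / (2 * s)) * (laplace p s + 1) * ∫ s' in (0:ℝ)..s, laplace p s' := by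
  intro s hs
  have hQ := integrableOn_exp_neg_mul_integral_Ioi hquot hs
  have hp := hint.exp_neg_mul hs.le
  calc laplace (T p) s
      = 1 / 2 * laplace (fun x => ∫ u in (0:ℝ)..x, p (x - u) * ∫ v in Ioi u, p v / v) s
          + 1 / 2 * laplace (fun x => ∫ v in Ioi x, p v / v) s :=
        laplace_const_mul_add_const_mul _ _
          (integrableOn_exp_neg_mul_intervalConvolution hp hQ) hQ
    _ = 1 / 2 * (laplace p s + 1) * laplace (fun x => ∫ v in Ioi x, p v / v) s := by
        rw [laplace_intervalConvolution hp hQ]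
        ring
    _ = _ := by
        rw [laplace_integral_Ioi hquot hs, intervalIntegral_laplace hint hs.le]
        field_simp

theorem laplace_of_T (p : ℝ → ℝ)
    (hint : IntegrableOn p (Ioi 0))
    (hpos : ∀ᵐ x ∂(volume.restrict (Ioi (0:ℝ))), 0 ≤ p x)
    (hone : ∫ x in Ioi (0:ℝ), p x = 1)
    (hquot : IntegrableOn (fun u => p u / u) (Ioi 0)) :
    ∀ s : ℝ, 0 < s →
      laplace (T p) s = (1 / (2 * s)) * (laplace p s + 1) * ∫ s' in (0:ℝ)..s, laplace p s' :=
  laplace_of_T_general p hint hquot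
end

section
/- For α ≥ 1 and a probability density p on (0,∞), the α-moment of T[p] satisfies M_α(T[p]) ≤ (1/(2(α+1))) (2^{α−1}(α+2) + 1) M_α(p); in particular if M_α(p) < ∞ then M_α(T[p]) < ∞. -/
open MeasureTheory Real Set

open scoped ENNReal

/-!
Write `q u = ∫_u^∞ p v / v dv`, so that `2 T[p] = p ⋆ q + q` on `(0, ∞)`. Fubini over the
triangle `0 < u < x` gives `M_α(q) = M_α(p) / (α + 1)`, in particular `∫ q = ∫ p = 1`.
Substituting `x = w + u` in the convolution and using `(w + u)^α ≤ 2^(α-1) (w^α + u^α)` gives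
`M_α(p ⋆ q) ≤ 2^(α-1) (M_α(p) ∫ q + ∫ p M_α(q))`. All integrals are lower Lebesgue integrals of
a nonnegative measurable representative of `p`, so no finiteness of moments is needed.
-/

noncomputable def momentIoi (α : ℝ) (F : ℝ → ℝ≥0∞) : ℝ≥0∞ :=
  ∫⁻ x in Ioi 0, ENNReal.ofReal (x ^ α) * F x

lemma ofReal_integral_le_lintegral_ofReal {X : Type*} [MeasurableSpace X] (μ : Measure X)
    (f : X → ℝ) : ENNReal.ofReal (∫ x, f x ∂μ) ≤ ∫⁻ x, ENNReal.ofReal (f x) ∂μ := by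
  by_cases hf : Integrable f μ
  · rw [integral_eq_lintegral_pos_part_sub_lintegral_neg_part hf]
    exact (ENNReal.ofReal_le_ofReal (sub_le_self _ ENNReal.toReal_nonneg)).trans
      ENNReal.ofReal_toReal_le
  · simp [integral_undef hf]

lemma Real.rpow_add_le_mul_rpow_add_rpow {a b α : ℝ} (ha : 0 ≤ a) (hb : 0 ≤ b) (hα : 1 ≤ α) :
    (a + b) ^ α ≤ 2 ^ (α - 1) * (a ^ α + b ^ α) := by
  exact_mod_cast NNReal.rpow_add_le_mul_rpow_add_rpow ⟨a, ha⟩ ⟨b, hb⟩ hα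

lemma lintegral_Ioo_rpow {α : ℝ} (hα : -1 < α) {v : ℝ} (hv : 0 ≤ v) :
    ∫⁻ x in Ioo 0 v, ENNReal.ofReal (x ^ α) = ENNReal.ofReal (v ^ (α + 1) / (α + 1)) := by
  have hint : IntegrableOn (fun x : ℝ => x ^ α) (Ioc 0 v) :=
    (intervalIntegrable_iff_integrableOn_Ioc_of_le hv).1
      (intervalIntegral.intervalIntegrable_rpow' hα)
  rw [restrict_Ioo_eq_restrict_Ioc, ← ofReal_integral_eq_lintegral_ofReal hint
    ((ae_restrict_iff' measurableSet_Ioc).2 (ae_of_all _ fun x hx => rpow_nonneg hx.1.le α)),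
    ← intervalIntegral.integral_of_le hv, integral_rpow (Or.inl hα),
    zero_rpow (by linarith : (0:ℝ) < α + 1).ne', sub_zero]

lemma lintegral_Ioi_lintegral_Ioo_swap {a : ℝ} {F : ℝ → ℝ → ℝ≥0∞}
    (hF : Measurable (Function.uncurry F)) :
    ∫⁻ x in Ioi a, ∫⁻ u in Ioo a x, F x u = ∫⁻ u in Ioi a, ∫⁻ x in Ioi u, F x u := by
  set G : ℝ × ℝ → ℝ≥0∞ := {q | q.2 < q.1}.indicator (Function.uncurry F)
  have hG : Measurable G := hF.indicator (measurableSet_lt measurable_snd measurable_fst)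
  calc ∫⁻ x in Ioi a, ∫⁻ u in Ioo a x, F x u = ∫⁻ x in Ioi a, ∫⁻ u in Ioi a, G (x, u) := by
        refine setLIntegral_congr_fun measurableSet_Ioi fun x _ => ?_
        change _ = ∫⁻ u in Ioi a, (Iio x).indicator (F x) u
        rw [lintegral_indicator measurableSet_Iio, Measure.restrict_restrict measurableSet_Iio,
          inter_comm, Ioi_inter_Iio]
    _ = ∫⁻ u in Ioi a, ∫⁻ x in Ioi a, G (x, u) := lintegral_lintegral_swap hG.aemeasurable
    _ = ∫⁻ u in Ioi a, ∫⁻ x in Ioi u, F x u := by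
        refine setLIntegral_congr_fun measurableSet_Ioi fun u hu => ?_
        change ∫⁻ x in Ioi a, (Ioi u).indicator (fun x => F x u) x = _
        rw [lintegral_indicator measurableSet_Ioi, Measure.restrict_restrict measurableSet_Ioi,
          inter_eq_left.2 (Ioi_subset_Ioi (le_of_lt hu))]

lemma lintegral_Ioi_eq_lintegral_Ioi_zero_add (u : ℝ) (φ : ℝ → ℝ≥0∞) :
    ∫⁻ x in Ioi u, φ x = ∫⁻ w in Ioi 0, φ (w + u) := by
  rw [← (measurePreserving_add_right volume u).setLIntegral_comp_preimage_emb
    (measurableEmbedding_addRight u), preimage_add_const_Ioi, sub_self]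

lemma momentIoi_lintegral_Ioi {α : ℝ} (hα : -1 < α) {h : ℝ → ℝ≥0∞} (hh : Measurable h) :
    momentIoi α (fun u => ∫⁻ v in Ioi u, h v)
      = ∫⁻ v in Ioi 0, ENNReal.ofReal (v ^ (α + 1) / (α + 1)) * h v := by
  calc momentIoi α (fun u => ∫⁻ v in Ioi u, h v)
      = ∫⁻ u in Ioi 0, ∫⁻ v in Ioi u, ENNReal.ofReal (u ^ α) * h v := by
        simp_rw [momentIoi, lintegral_const_mul' _ _ ENNReal.ofReal_ne_top]
    _ = ∫⁻ v in Ioi 0, ∫⁻ u in Ioo 0 v, ENNReal.ofReal (u ^ α) * h v :=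
        (lintegral_Ioi_lintegral_Ioo_swap (by fun_prop)).symm
    _ = ∫⁻ v in Ioi 0, ENNReal.ofReal (v ^ (α + 1) / (α + 1)) * h v := by
        refine setLIntegral_congr_fun measurableSet_Ioi fun v hv => ?_
        rw [lintegral_mul_const _ (by fun_prop), lintegral_Ioo_rpow hα (le_of_lt hv)]

lemma momentIoi_conv_le {α : ℝ} (hα : 1 ≤ α) {f g : ℝ → ℝ≥0∞} (hf : Measurable f)
    (hg : Measurable g) :
    momentIoi α (fun x => ∫⁻ u in Ioo 0 x, f (x - u) * g u)
      ≤ ENNReal.ofReal (2 ^ (α - 1)) *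
          (momentIoi α f * momentIoi 0 g + momentIoi 0 f * momentIoi α g) := by
  calc momentIoi α (fun x => ∫⁻ u in Ioo 0 x, f (x - u) * g u)
      = ∫⁻ x in Ioi 0, ∫⁻ u in Ioo 0 x, ENNReal.ofReal (x ^ α) * f (x - u) * g u := by
        simp_rw [momentIoi, ← lintegral_const_mul' _ _ ENNReal.ofReal_ne_top, mul_assoc]
    _ = ∫⁻ u in Ioi 0, ∫⁻ x in Ioi u, ENNReal.ofReal (x ^ α) * f (x - u) * g u :=
        lintegral_Ioi_lintegral_Ioo_swap (by fun_prop)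
    _ = ∫⁻ u in Ioi 0, ∫⁻ w in Ioi 0, ENNReal.ofReal ((w + u) ^ α) * f w * g u := by
        refine lintegral_congr fun u => ?_
        rw [lintegral_Ioi_eq_lintegral_Ioi_zero_add u]
        simp only [add_sub_cancel_right]
    _ ≤ ∫⁻ u in Ioi 0, ∫⁻ w in Ioi 0, ENNReal.ofReal (2 ^ (α - 1)) *
          (g u * (ENNReal.ofReal (w ^ α) * f w) + ENNReal.ofReal (u ^ α) * g u * f w) := by
        refine setLIntegral_mono' measurableSet_Ioi fun u hu =>
          setLIntegral_mono' measurableSet_Ioi fun w hw => ?_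
        calc ENNReal.ofReal ((w + u) ^ α) * f w * g u
            ≤ ENNReal.ofReal (2 ^ (α - 1) * (w ^ α + u ^ α)) * f w * g u := by
              gcongr
              exact Real.rpow_add_le_mul_rpow_add_rpow (le_of_lt hw) (le_of_lt hu) hα
          _ = _ := by
              rw [ENNReal.ofReal_mul (by positivity),
                ENNReal.ofReal_add (rpow_nonneg (le_of_lt hw) _) (rpow_nonneg (le_of_lt hu) _)]
              ring
    _ = ENNReal.ofReal (2 ^ (α - 1)) * ∫⁻ u in Ioi 0,
          (g u * momentIoi α f + ENNReal.ofReal (u ^ α) * g u * momentIoi 0 f) := by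
        rw [← lintegral_const_mul' _ _ ENNReal.ofReal_ne_top]
        refine lintegral_congr fun u => ?_
        rw [lintegral_const_mul' _ _ ENNReal.ofReal_ne_top,
          lintegral_add_left (by fun_prop), lintegral_const_mul _ (by fun_prop),
          lintegral_const_mul _ hf, momentIoi, momentIoi]
        simp
    _ = _ := by
        rw [lintegral_add_left (by fun_prop), lintegral_mul_const _ hg,
          lintegral_mul_const _ (by fun_prop)]
        simp only [momentIoi, rpow_zero, ENNReal.ofReal_one, one_mul]
        ring

noncomputable def weightedTail (f : ℝ → ℝ) (u : ℝ) : ℝ≥0∞ :=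
  ∫⁻ v in Ioi u, ENNReal.ofReal (f v / v)

@[fun_prop]
lemma measurable_weightedTail (f : ℝ → ℝ) : Measurable (weightedTail f) :=
  Antitone.measurable fun _ _ h => lintegral_mono_set (Ioi_subset_Ioi h)

lemma momentIoi_weightedTail {α : ℝ} (hα : -1 < α) {f : ℝ → ℝ} (hf : Measurable f) :
    momentIoi α (weightedTail f)
      = ENNReal.ofReal (1 / (α + 1)) * momentIoi α (fun v => ENNReal.ofReal (f v)) := by
  rw [show weightedTail f = fun u => ∫⁻ v in Ioi u, ENNReal.ofReal (f v / v) from rfl,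
    momentIoi_lintegral_Ioi hα (by fun_prop), momentIoi,
    ← lintegral_const_mul' _ _ ENNReal.ofReal_ne_top]
  refine setLIntegral_congr_fun measurableSet_Ioi fun v hv => ?_
  have hα1 : 0 < α + 1 := by linarith
  have hv0 : 0 < v := hv
  rw [← ENNReal.ofReal_mul (by positivity), ← ENNReal.ofReal_mul (by positivity),
    ← ENNReal.ofReal_mul (by positivity)]
  congr 1
  rw [rpow_add_one hv0.ne']
  field_simp

lemma lintegral_ofReal_rpow_mul_eq_momentIoi (α : ℝ) (g : ℝ → ℝ) :
    ∫⁻ x in Ioi 0, ENNReal.ofReal (x ^ α * g x) = momentIoi α (fun x => ENNReal.ofReal (g x)) :=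
  setLIntegral_congr_fun measurableSet_Ioi fun _ hx =>
    ENNReal.ofReal_mul (rpow_nonneg (le_of_lt hx) α)

section Representative

variable {p f : ℝ → ℝ}

lemma ofReal_integral_Ioi_div_le_weightedTail (hpf : p =ᵐ[volume.restrict (Ioi 0)] f) {u : ℝ}
    (hu : 0 ≤ u) :
    ENNReal.ofReal (∫ v in Ioi u, p v / v) ≤ weightedTail f u := by
  refine (ofReal_integral_le_lintegral_ofReal _ _).trans (le_of_eq (lintegral_congr_ae ?_))
  filter_upwards [ae_restrict_of_ae_restrict_of_subset (Ioi_subset_Ioi hu) hpf] with v hv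
  rw [hv]

lemma ofReal_intervalIntegral_conv_le (hpf : p =ᵐ[volume.restrict (Ioi 0)] f) (hf0 : 0 ≤ f)
    {x : ℝ} (hx : 0 ≤ x) :
    ENNReal.ofReal (∫ u in (0:ℝ)..x, p (x - u) * ∫ v in Ioi u, p v / v)
      ≤ ∫⁻ u in Ioo 0 x, ENNReal.ofReal (f (x - u)) * weightedTail f u := by
  have hreflect : ∀ᵐ u, 0 < x - u → p (x - u) = f (x - u) :=
    (Measure.measurePreserving_sub_left volume x).quasiMeasurePreserving.ae
      ((ae_restrict_iff' measurableSet_Ioi).1 hpf)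
  rw [intervalIntegral.integral_of_le hx, ← restrict_Ioo_eq_restrict_Ioc]
  refine (ofReal_integral_le_lintegral_ofReal _ _).trans (lintegral_mono_ae ?_)
  filter_upwards [ae_restrict_of_ae hreflect, ae_restrict_mem measurableSet_Ioo] with u hpu hu
  rw [hpu (sub_pos.2 hu.2), ENNReal.ofReal_mul (hf0 _)]
  gcongr
  exact ofReal_integral_Ioi_div_le_weightedTail hpf hu.1.le

lemma ofReal_T_le (hpf : p =ᵐ[volume.restrict (Ioi 0)] f) (hf0 : 0 ≤ f) {x : ℝ} (hx : 0 ≤ x) :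
    ENNReal.ofReal (T p x) ≤ ENNReal.ofReal (1 / 2) *
      ((∫⁻ u in Ioo 0 x, ENNReal.ofReal (f (x - u)) * weightedTail f u) + weightedTail f x) := by
  rw [T, ← mul_add, ENNReal.ofReal_mul (by norm_num)]
  gcongr
  exact ENNReal.ofReal_add_le.trans (add_le_add (ofReal_intervalIntegral_conv_le hpf hf0 hx)
    (ofReal_integral_Ioi_div_le_weightedTail hpf hx))

lemma momentIoi_T_le (hpf : p =ᵐ[volume.restrict (Ioi 0)] f) {α : ℝ} (hα : 1 ≤ α)
    (hf : Measurable f) (hf0 : 0 ≤ f) (hmass : momentIoi 0 (fun x => ENNReal.ofReal (f x)) = 1) :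
    momentIoi α (fun x => ENNReal.ofReal (T p x))
      ≤ ENNReal.ofReal (1 / 2) * (ENNReal.ofReal (2 ^ (α - 1)) *
          (momentIoi α (fun x => ENNReal.ofReal (f x))
            + ENNReal.ofReal (1 / (α + 1)) * momentIoi α (fun x => ENNReal.ofReal (f x)))
          + ENNReal.ofReal (1 / (α + 1)) * momentIoi α (fun x => ENNReal.ofReal (f x))) := by
  have hconv := momentIoi_conv_le hα (f := fun x => ENNReal.ofReal (f x)) (by fun_prop)
    (measurable_weightedTail f)
  rw [momentIoi_weightedTail (α := 0) (by norm_num) hf, momentIoi_weightedTail (by linarith) hf,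
    hmass] at hconv
  calc momentIoi α (fun x => ENNReal.ofReal (T p x))
      ≤ momentIoi α (fun x => ENNReal.ofReal (1 / 2) *
          ((∫⁻ u in Ioo 0 x, ENNReal.ofReal (f (x - u)) * weightedTail f u) + weightedTail f x)) :=
        setLIntegral_mono' measurableSet_Ioi fun x hx => by
          gcongr
          exact ofReal_T_le hpf hf0 (le_of_lt hx)
    _ = ENNReal.ofReal (1 / 2) * (momentIoi α
          (fun x => ∫⁻ u in Ioo 0 x, ENNReal.ofReal (f (x - u)) * weightedTail f u)
          + momentIoi α (weightedTail f)) := by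
        simp_rw [momentIoi, mul_left_comm _ (ENNReal.ofReal (1 / 2)), mul_add]
        rw [lintegral_add_right _ (by fun_prop), lintegral_const_mul' _ _ ENNReal.ofReal_ne_top,
          lintegral_const_mul' _ _ ENNReal.ofReal_ne_top]
    _ ≤ _ := by
        rw [momentIoi_weightedTail (by linarith) hf]
        gcongr
        simpa using hconv

end Representative

theorem moment_bound_T (p : ℝ → ℝ) (α : ℝ) (hα : 1 ≤ α)
    (hint : IntegrableOn p (Ioi 0))
    (hpos : ∀ᵐ x ∂(volume.restrict (Ioi (0:ℝ))), 0 ≤ p x)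
    (hone : ∫ x in Ioi (0:ℝ), p x = 1) :
    (∫⁻ x in Ioi (0:ℝ), ENNReal.ofReal (x ^ α * T p x))
      ≤ ENNReal.ofReal ((1 / (2 * (α + 1))) * (2 ^ (α - 1) * (α + 2) + 1))
          * ∫⁻ x in Ioi (0:ℝ), ENNReal.ofReal (x ^ α * p x) := by
  obtain ⟨f, hf, hf0, hpf⟩ := hint.aemeasurable.exists_measurable_nonneg hpos
  have hmass : momentIoi 0 (fun x => ENNReal.ofReal (f x)) = 1 := by
    simp only [momentIoi, rpow_zero, ENNReal.ofReal_one, one_mul]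
    rw [← ENNReal.ofReal_one, ← hone, ofReal_integral_eq_lintegral_ofReal hint hpos]
    refine lintegral_congr_ae ?_
    filter_upwards [hpf] with x hx
    rw [hx]
  have hmoment : ∫⁻ x in Ioi 0, ENNReal.ofReal (x ^ α * p x)
      = momentIoi α (fun x => ENNReal.ofReal (f x)) := by
    rw [lintegral_ofReal_rpow_mul_eq_momentIoi, momentIoi, momentIoi]
    refine lintegral_congr_ae ?_
    filter_upwards [hpf] with x hx
    rw [hx]
  have hconst : (1 / (2 * (α + 1))) * (2 ^ (α - 1) * (α + 2) + 1)
      = 1 / 2 * (2 ^ (α - 1) * (1 + 1 / (α + 1)) + 1 / (α + 1)) := by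
    field_simp
    ring
  rw [hmoment, lintegral_ofReal_rpow_mul_eq_momentIoi]
  refine (momentIoi_T_le hpf hα hf hf0 hmass).trans (le_of_eq ?_)
  rw [hconst, ENNReal.ofReal_mul (by norm_num), ENNReal.ofReal_add (by positivity)
    (by positivity), ENNReal.ofReal_mul (by positivity), ENNReal.ofReal_add zero_le_one
    (by positivity), ENNReal.ofReal_one]
  ring
end

section
/- For a probability density p on (0,∞) with finite mean, the operator T preserves the mean: M₁(T[p]) = M₁(p). -/
/-!
Write `Q(u) = ∫_u^∞ p(v)/v dv` (`mulUniformDensity`): it is the density of `U·X` for `U` uniform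
on `(0,1)` and `X ∼ p` independent, so by Tonelli `∫ Q = ∫ p = 1` and `M₁(Q) = M₁(p)/2`.
Since `T[p] = ½ (p ∗ Q) + ½ Q` on `(0,∞)` and the mean of a convolution of densities is the sum of
the means, `M₁(T[p]) = ½ (M₁ + M₁/2) + ½ · M₁/2 = M₁`.

The computation is carried out with `ℝ≥0∞`-valued integrals, where Tonelli applies without
integrability side conditions. The finite mean then forces the convolution term to be finite
almost everywhere, which is exactly where the real integrals defining `T` agree with it.
-/

open MeasureTheory Real Set

open scoped ENNReal

theorem lintegral_lintegral_Ioi_swap {F : ℝ → ℝ → ℝ≥0∞}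
    (hF : Measurable (Function.uncurry F)) (a : ℝ) :
    ∫⁻ x in Ioi a, ∫⁻ y in Ioi x, F x y = ∫⁻ y in Ioi a, ∫⁻ x in Ioo a y, F x y := by
  set G : ℝ → ℝ → ℝ≥0∞ := fun x y => if x < y then F x y else 0
  have hG : Measurable (Function.uncurry G) :=
    Measurable.ite (measurableSet_lt measurable_fst measurable_snd) hF measurable_const
  calc ∫⁻ x in Ioi a, ∫⁻ y in Ioi x, F x y
      = ∫⁻ x in Ioi a, ∫⁻ y in Ioi a, G x y := by
        refine setLIntegral_congr_fun measurableSet_Ioi fun x hx => ?_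
        rw [← lintegral_indicator measurableSet_Ioi, ← lintegral_indicator measurableSet_Ioi]
        congr 1 with y
        by_cases hxy : x < y
        · simp [G, hxy, mem_Ioi.1 hx |>.trans hxy]
        · simp [G, indicator_apply, hxy]
    _ = ∫⁻ y in Ioi a, ∫⁻ x in Ioi a, G x y := lintegral_lintegral_swap hG.aemeasurable
    _ = ∫⁻ y in Ioi a, ∫⁻ x in Ioo a y, F x y := by
        refine setLIntegral_congr_fun measurableSet_Ioi fun y _ => ?_
        rw [← lintegral_indicator measurableSet_Ioi, ← lintegral_indicator measurableSet_Ioo]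
        congr 1 with x
        by_cases hxy : x < y <;> simp [G, indicator_apply, hxy]

theorem lintegral_Ioi_mul_lintegral_Ioi {f g : ℝ → ℝ≥0∞} (hf : Measurable f)
    (hg : Measurable g) (a : ℝ) :
    ∫⁻ x in Ioi a, f x * ∫⁻ y in Ioi x, g y = ∫⁻ y in Ioi a, (∫⁻ x in Ioo a y, f x) * g y := by
  simp_rw [← lintegral_const_mul _ hg, ← lintegral_mul_const _ hf]
  exact lintegral_lintegral_Ioi_swap (by fun_prop) a

theorem lintegral_Ioi_comp_add_right (f : ℝ → ℝ≥0∞) (u : ℝ) :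
    ∫⁻ x in Ioi u, f x = ∫⁻ w in Ioi 0, f (w + u) := by
  simpa [preimage_add_const_Ioi] using
    ((measurePreserving_add_right volume u).setLIntegral_comp_preimage_emb
      (measurableEmbedding_addRight u) f (Ioi u)).symm

noncomputable def convIoi (f g : ℝ → ℝ≥0∞) (x : ℝ) : ℝ≥0∞ :=
  ∫⁻ u in Ioo 0 x, f (x - u) * g u

theorem measurable_convIoi {f g : ℝ → ℝ≥0∞} (hf : Measurable f) (hg : Measurable g) :
    Measurable (convIoi f g) := by
  have hset : MeasurableSet {z : ℝ × ℝ | z.2 ∈ Ioo 0 z.1} :=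
    (measurableSet_lt measurable_const measurable_snd).inter
      (measurableSet_lt measurable_snd measurable_fst)
  have hint : Measurable fun z : ℝ × ℝ =>
      (Ioo 0 z.1).indicator (fun u => f (z.1 - u) * g u) z.2 :=
    Measurable.ite hset (by fun_prop) measurable_const
  have h := hint.lintegral_prod_right' (ν := volume)
  simp only [lintegral_indicator measurableSet_Ioo] at h
  exact h

theorem lintegral_mul_convIoi {f g : ℝ → ℝ≥0∞} (hf : Measurable f) (hg : Measurable g) :
    ∫⁻ x in Ioi 0, ENNReal.ofReal x * convIoi f g x =
      (∫⁻ w in Ioi 0, ENNReal.ofReal w * f w) * (∫⁻ u in Ioi 0, g u)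
        + (∫⁻ w in Ioi 0, f w) * ∫⁻ u in Ioi 0, ENNReal.ofReal u * g u := by
  set A := ∫⁻ w in Ioi 0, ENNReal.ofReal w * f w
  set B := ∫⁻ w in Ioi 0, f w
  have hinner : ∀ u ∈ Ioi (0:ℝ), ∫⁻ x in Ioi u, ENNReal.ofReal x * (f (x - u) * g u)
      = A * g u + B * (ENNReal.ofReal u * g u) := fun u hu => by
    calc ∫⁻ x in Ioi u, ENNReal.ofReal x * (f (x - u) * g u)
        = ∫⁻ w in Ioi 0, (ENNReal.ofReal w * f w) * g u + f w * (ENNReal.ofReal u * g u) := by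
          rw [lintegral_Ioi_comp_add_right]
          refine setLIntegral_congr_fun measurableSet_Ioi fun w hw => ?_
          rw [add_sub_cancel_right, ENNReal.ofReal_add (le_of_lt hw) (le_of_lt hu)]
          ring
      _ = A * g u + B * (ENNReal.ofReal u * g u) := by
          rw [lintegral_add_right _ (by fun_prop), lintegral_mul_const _ (by fun_prop),
            lintegral_mul_const _ hf]
  calc ∫⁻ x in Ioi 0, ENNReal.ofReal x * convIoi f g x
      = ∫⁻ x in Ioi 0, ∫⁻ u in Ioo 0 x, ENNReal.ofReal x * (f (x - u) * g u) := by
        simp_rw [convIoi, ← lintegral_const_mul' _ _ ENNReal.ofReal_ne_top]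
    _ = ∫⁻ u in Ioi 0, ∫⁻ x in Ioi u, ENNReal.ofReal x * (f (x - u) * g u) :=
        (lintegral_lintegral_Ioi_swap (by fun_prop) 0).symm
    _ = ∫⁻ u in Ioi 0, A * g u + B * (ENNReal.ofReal u * g u) :=
        setLIntegral_congr_fun measurableSet_Ioi hinner
    _ = A * (∫⁻ u in Ioi 0, g u) + B * ∫⁻ u in Ioi 0, ENNReal.ofReal u * g u := by
        rw [lintegral_add_right _ (by fun_prop), lintegral_const_mul _ hg,
          lintegral_const_mul _ (by fun_prop)]

noncomputable def mulUniformDensity (f : ℝ → ℝ≥0∞) (u : ℝ) : ℝ≥0∞ :=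
  ∫⁻ v in Ioi u, ENNReal.ofReal v⁻¹ * f v

theorem measurable_mulUniformDensity (f : ℝ → ℝ≥0∞) : Measurable (mulUniformDensity f) :=
  Antitone.measurable fun _ _ h => lintegral_mono_set (Ioi_subset_Ioi h)

theorem mulUniformDensity_ne_top {f : ℝ → ℝ≥0∞} (hf : ∫⁻ v in Ioi 0, f v ≠ ∞) {u : ℝ}
    (hu : 0 < u) : mulUniformDensity f u ≠ ∞ := by
  refine ne_top_of_le_ne_top (ENNReal.mul_ne_top (ENNReal.ofReal_ne_top (r := u⁻¹)) hf) ?_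
  calc mulUniformDensity f u ≤ ∫⁻ v in Ioi u, ENNReal.ofReal u⁻¹ * f v := by
        refine lintegral_mono_ae ?_
        filter_upwards [ae_restrict_mem measurableSet_Ioi] with v hv
        gcongr
        exact le_of_lt hv
    _ = ENNReal.ofReal u⁻¹ * ∫⁻ v in Ioi u, f v :=
        lintegral_const_mul' _ _ ENNReal.ofReal_ne_top
    _ ≤ ENNReal.ofReal u⁻¹ * ∫⁻ v in Ioi 0, f v := by gcongr

theorem lintegral_mulUniformDensity {f : ℝ → ℝ≥0∞} (hf : Measurable f) :
    ∫⁻ u in Ioi 0, mulUniformDensity f u = ∫⁻ v in Ioi 0, f v := by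
  have h := lintegral_Ioi_mul_lintegral_Ioi (f := fun _ => 1) measurable_const
    (by fun_prop : Measurable fun v => ENNReal.ofReal v⁻¹ * f v) 0
  simp only [one_mul] at h
  unfold mulUniformDensity
  rw [h]
  refine setLIntegral_congr_fun measurableSet_Ioi fun v hv => ?_
  rw [setLIntegral_one, Real.volume_Ioo, sub_zero, ← mul_assoc,
    ← ENNReal.ofReal_mul (le_of_lt hv), mul_inv_cancel₀ (ne_of_gt hv), ENNReal.ofReal_one,
    one_mul]

theorem lintegral_mul_mulUniformDensity {f : ℝ → ℝ≥0∞} (hf : Measurable f) :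
    ∫⁻ u in Ioi 0, ENNReal.ofReal u * mulUniformDensity f u
      = 2⁻¹ * ∫⁻ v in Ioi 0, ENNReal.ofReal v * f v := by
  have hmoment : ∀ v : ℝ, 0 < v →
      ∫⁻ u in Ioo 0 v, ENNReal.ofReal u = ENNReal.ofReal (v ^ 2 / 2) := by
    intro v hv
    have hint : IntegrableOn (fun u : ℝ => u) (Ioo 0 v) :=
      continuous_id.integrableOn_Icc.mono_set Ioo_subset_Icc_self
    rw [← ofReal_integral_eq_lintegral_ofReal hint
      ((ae_restrict_mem measurableSet_Ioo).mono fun u hu => le_of_lt hu.1),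
      ← integral_Ioc_eq_integral_Ioo, ← intervalIntegral.integral_of_le hv.le, integral_id]
    ring_nf
  unfold mulUniformDensity
  rw [lintegral_Ioi_mul_lintegral_Ioi (by fun_prop) (by fun_prop),
    ← lintegral_const_mul' _ _ (by simp)]
  refine setLIntegral_congr_fun measurableSet_Ioi fun v hv => ?_
  rw [hmoment v hv, ← mul_assoc, ← ENNReal.ofReal_mul (by positivity),
    show v ^ 2 / 2 * v⁻¹ = 2⁻¹ * v by field_simp, ENNReal.ofReal_mul (by norm_num),
    ENNReal.ofReal_inv_of_pos two_pos, ENNReal.ofReal_ofNat, mul_assoc]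

/-- The operator `T` with its integrals taken in `ℝ≥0∞`. -/
noncomputable def lT (f : ℝ → ℝ≥0∞) (x : ℝ) : ℝ≥0∞ :=
  2⁻¹ * (convIoi f (mulUniformDensity f) x + mulUniformDensity f x)

theorem measurable_lT {f : ℝ → ℝ≥0∞} (hf : Measurable f) : Measurable (lT f) :=
  ((measurable_convIoi hf (measurable_mulUniformDensity f)).add
    (measurable_mulUniformDensity f)).const_mul _

theorem lintegral_mul_lT {f : ℝ → ℝ≥0∞} (hf : Measurable f)
    (hone : ∫⁻ x in Ioi 0, f x = 1) :
    ∫⁻ x in Ioi 0, ENNReal.ofReal x * lT f x = ∫⁻ x in Ioi 0, ENNReal.ofReal x * f x := by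
  set M := ∫⁻ x in Ioi 0, ENNReal.ofReal x * f x
  have hQ := measurable_mulUniformDensity f
  calc ∫⁻ x in Ioi 0, ENNReal.ofReal x * lT f x
      = ∫⁻ x in Ioi 0, 2⁻¹ * (ENNReal.ofReal x * convIoi f (mulUniformDensity f) x)
          + 2⁻¹ * (ENNReal.ofReal x * mulUniformDensity f x) := by
        congr 1 with x
        rw [lT]
        ring
    _ = 2⁻¹ * (M * 1 + 1 * (2⁻¹ * M)) + 2⁻¹ * (2⁻¹ * M) := by
        rw [lintegral_add_right _ (by fun_prop), lintegral_const_mul' _ _ (by simp),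
          lintegral_const_mul' _ _ (by simp), lintegral_mul_convIoi hf hQ,
          lintegral_mulUniformDensity hf, hone, lintegral_mul_mulUniformDensity hf]
    _ = M := by
        rw [mul_one, one_mul, mul_add, add_assoc, ← add_mul, ENNReal.inv_two_add_inv_two,
          one_mul, ← add_mul, ENNReal.inv_two_add_inv_two, one_mul]

theorem integral_Ioi_div_eq_toReal_mulUniformDensity {p : ℝ → ℝ} (hp : Measurable p)
    (hp0 : 0 ≤ p) {u : ℝ} (hu : 0 ≤ u) :
    ∫ v in Ioi u, p v / v = (mulUniformDensity (fun v => ENNReal.ofReal (p v)) u).toReal := by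
  rw [integral_eq_lintegral_of_nonneg_ae _
    (by fun_prop : Measurable fun v => p v / v).aestronglyMeasurable]
  · congr 1
    refine setLIntegral_congr_fun measurableSet_Ioi fun v hv => ?_
    rw [div_eq_inv_mul, ENNReal.ofReal_mul (inv_nonneg.2 (hu.trans hv.le))]
  · filter_upwards [ae_restrict_mem measurableSet_Ioi] with v hv
    exact div_nonneg (hp0 v) (hu.trans hv.le)

theorem T_eq_toReal_lT {p : ℝ → ℝ} (hp : Measurable p) (hp0 : 0 ≤ p)
    (hfin : ∫⁻ v in Ioi 0, ENNReal.ofReal (p v) ≠ ∞) {x : ℝ} (hx : 0 < x)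
    (hTx : lT (fun y => ENNReal.ofReal (p y)) x ≠ ∞) :
    T p x = (lT (fun y => ENNReal.ofReal (p y)) x).toReal := by
  set f := fun y => ENNReal.ofReal (p y)
  set Q := mulUniformDensity f
  have hQ : Measurable Q := measurable_mulUniformDensity f
  have hconv :
      ∫ u in (0:ℝ)..x, p (x - u) * ∫ v in Ioi u, p v / v = (convIoi f Q x).toReal := by
    rw [intervalIntegral.integral_of_le hx.le, integral_Ioc_eq_integral_Ioo,
      setIntegral_congr_fun measurableSet_Ioo fun u hu => by
        rw [integral_Ioi_div_eq_toReal_mulUniformDensity hp hp0 hu.1.le],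
      integral_eq_lintegral_of_nonneg_ae
        (ae_of_all _ fun u => mul_nonneg (hp0 _) ENNReal.toReal_nonneg)
        (by fun_prop : Measurable fun u => p (x - u) * (Q u).toReal).aestronglyMeasurable]
    congr 1
    refine setLIntegral_congr_fun measurableSet_Ioo fun u hu => ?_
    rw [ENNReal.ofReal_mul (hp0 _), ENNReal.ofReal_toReal (mulUniformDensity_ne_top hfin hu.1)]
  have hsum : convIoi f Q x + Q x ≠ ∞ := by
    intro h
    simp [lT, f, Q, h] at hTx
  obtain ⟨hC, hQx⟩ := ENNReal.add_ne_top.1 hsum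
  rw [T, hconv, integral_Ioi_div_eq_toReal_mulUniformDensity hp hp0 hx.le, lT,
    ENNReal.toReal_mul, ENNReal.toReal_add hC hQx]
  simp only [ENNReal.toReal_inv, ENNReal.toReal_ofNat]
  ring

theorem T_congr_ae {p q : ℝ → ℝ} (hpq : p =ᵐ[volume.restrict (Ioi 0)] q) {x : ℝ}
    (hx : 0 < x) : T p x = T q x := by
  have htail : ∀ u, 0 ≤ u → ∫ v in Ioi u, p v / v = ∫ v in Ioi u, q v / v := fun u hu =>
    integral_congr_ae ((ae_restrict_of_ae_restrict_of_subset (Ioi_subset_Ioi hu) hpq).mono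
      fun v hv => by simp only [hv])
  have hconv (r : ℝ → ℝ) : ∫ u in (0:ℝ)..x, r (x - u) * ∫ v in Ioi u, r v / v
      = ∫ w in Ioc 0 x, r w * ∫ v in Ioi (x - w), r v / v := by
    have h := intervalIntegral.integral_comp_sub_left
      (fun w => r w * ∫ v in Ioi (x - w), r v / v) (a := 0) (b := x) x
    simp only [sub_sub_cancel, sub_self, sub_zero] at h
    rw [h, intervalIntegral.integral_of_le hx.le]
  rw [T, T, hconv, hconv, htail x hx.le]
  congr 2
  refine integral_congr_ae ?_
  filter_upwards [ae_restrict_of_ae_restrict_of_subset Ioc_subset_Ioi_self hpq,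
    ae_restrict_mem measurableSet_Ioc] with w hw hwx
  rw [hw, htail _ (sub_nonneg.2 hwx.2)]

theorem integral_mul_T_of_measurable {p : ℝ → ℝ} (hp : Measurable p) (hp0 : 0 ≤ p)
    (hone : ∫⁻ x in Ioi 0, ENNReal.ofReal (p x) = 1)
    (hmean : IntegrableOn (fun x => x * p x) (Ioi 0)) :
    ∫ x in Ioi (0:ℝ), x * T p x = ∫ x in Ioi (0:ℝ), x * p x := by
  set f := fun y => ENNReal.ofReal (p y)
  have hf : Measurable f := hp.ennreal_ofReal
  have hmean' : ∫⁻ x in Ioi 0, ENNReal.ofReal x * f x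
      = ENNReal.ofReal (∫ x in Ioi (0:ℝ), x * p x) := by
    simp_rw [f, ← ENNReal.ofReal_mul' (hp0 _)]
    exact (ofReal_integral_eq_lintegral_ofReal hmean ((ae_restrict_mem measurableSet_Ioi).mono
      fun x hx => mul_nonneg (le_of_lt hx) (hp0 x))).symm
  have hmoment := lintegral_mul_lT hf hone
  have hmeas : AEMeasurable (fun x => ENNReal.ofReal x * lT f x) (volume.restrict (Ioi 0)) :=
    (measurable_id.ennreal_ofReal.mul (measurable_lT hf)).aemeasurable
  have hlt : ∀ᵐ x ∂volume.restrict (Ioi 0), ENNReal.ofReal x * lT f x < ∞ :=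
    ae_lt_top' hmeas (by rw [hmoment, hmean']; exact ENNReal.ofReal_ne_top)
  calc ∫ x in Ioi (0:ℝ), x * T p x
      = ∫ x in Ioi (0:ℝ), (ENNReal.ofReal x * lT f x).toReal := by
        refine integral_congr_ae ?_
        filter_upwards [hlt, ae_restrict_mem measurableSet_Ioi] with x hxT hx
        have hTx : lT f x ≠ ∞ :=
          (ENNReal.lt_top_of_mul_ne_top_right hxT.ne (by simpa using hx)).ne
        rw [T_eq_toReal_lT hp hp0 (by rw [hone]; exact ENNReal.one_ne_top) hx hTx,
          ENNReal.toReal_mul, ENNReal.toReal_ofReal (le_of_lt hx)]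
    _ = ∫ x in Ioi (0:ℝ), x * p x := by
        rw [integral_toReal hmeas hlt, hmoment, hmean',
          ENNReal.toReal_ofReal (setIntegral_nonneg measurableSet_Ioi fun x hx =>
            mul_nonneg (le_of_lt hx) (hp0 x))]

theorem T_preserves_mean (p : ℝ → ℝ)
    (hint : IntegrableOn p (Ioi 0))
    (hpos : ∀ᵐ x ∂(volume.restrict (Ioi (0:ℝ))), 0 ≤ p x)
    (hone : ∫ x in Ioi (0:ℝ), p x = 1)
    (hmean : IntegrableOn (fun x => x * p x) (Ioi 0)) :
    ∫ x in Ioi (0:ℝ), x * T p x = ∫ x in Ioi (0:ℝ), x * p x := by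
  obtain ⟨q, hq, hq0, hpq⟩ := hint.aemeasurable.exists_measurable_nonneg hpos
  have hq_one : ∫⁻ x in Ioi 0, ENNReal.ofReal (q x) = 1 := by
    rw [← ofReal_integral_eq_lintegral_ofReal (hint.congr hpq) (ae_of_all _ hq0),
      ← integral_congr_ae hpq, hone, ENNReal.ofReal_one]
  have hxpq : (fun x => x * p x) =ᵐ[volume.restrict (Ioi 0)] fun x => x * q x :=
    hpq.mono fun x hx => by simp only [hx]
  rw [setIntegral_congr_fun measurableSet_Ioi fun x hx => by rw [T_congr_ae hpq hx],
    integral_congr_ae hxpq]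
  exact integral_mul_T_of_measurable hq hq0 hq_one (hmean.congr hxpq)
end

section
/- If 1 < α < 2, w > 0, and p, q are probability densities on (0,∞) with M₁(p) = M₁(q) = w and finite α-moments, then d_α(p,q) := sup_{s>0} |p̂(s) − q̂(s)| / s^α is finite. -/
open MeasureTheory Real Set

lemma key_ineq {α : ℝ} (hα1 : 1 ≤ α) (hα2 : α ≤ 2) {u : ℝ} (hu : 0 ≤ u) :
    |Real.exp (-u) - 1 + u| ≤ u ^ α := by
  rcases le_or_gt u 1 with h | h
  · have h1 : |Real.exp (-u) - 1 - (-u)| ≤ (-u) ^ 2 :=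
      Real.abs_exp_sub_one_sub_id_le (by rw [abs_neg, abs_of_nonneg hu]; exact h)
    rw [sub_neg_eq_add] at h1
    have h2 : (-u) ^ 2 = u ^ (2:ℝ) := by
      rw [neg_pow, ← Real.rpow_natCast u 2]; norm_num
    have h3 : u ^ (2:ℝ) ≤ u ^ α := by
      rcases eq_or_lt_of_le hu with h0 | h0
      · rw [← h0, Real.zero_rpow (by norm_num), Real.zero_rpow (by linarith)]
      · exact Real.rpow_le_rpow_of_exponent_ge h0 h hα2
    exact (h1.trans_eq h2).trans h3
  · have hpos : 0 ≤ Real.exp (-u) - 1 + u := by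
      have := Real.add_one_le_exp (-u); linarith
    have hle : Real.exp (-u) - 1 + u ≤ u := by
      have : Real.exp (-u) ≤ 1 := Real.exp_le_one_iff.mpr (by linarith)
      linarith
    have : u ≤ u ^ α := by
      calc u = u ^ (1:ℝ) := (Real.rpow_one u).symm
        _ ≤ u ^ α := Real.rpow_le_rpow_of_exponent_le h.le hα1
    rw [abs_of_nonneg hpos]; linarith

lemma aux_density (α s : ℝ) (hα1 : 1 < α) (hα2 : α < 2) (hs : 0 < s)
    (p : ℝ → ℝ) (hpint : IntegrableOn p (Ioi 0))
    (hppos : ∀ᵐ x ∂(volume.restrict (Ioi (0:ℝ))), 0 ≤ p x)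
    (hpmom : IntegrableOn (fun x => x ^ α * p x) (Ioi 0)) :
    (∫ x in Ioi (0:ℝ), (Real.exp (-(s*x)) - 1 + s*x) * p x)
      = laplace p s - (∫ x in Ioi (0:ℝ), p x) + s * (∫ x in Ioi (0:ℝ), x * p x)
    ∧ |∫ x in Ioi (0:ℝ), (Real.exp (-(s*x)) - 1 + s*x) * p x|
        ≤ s ^ α * ∫ x in Ioi (0:ℝ), x ^ α * p x := by
  have hpm := hpint.aestronglyMeasurable
  have hmem : ∀ᵐ x ∂(volume.restrict (Ioi (0:ℝ))), x ∈ Ioi (0:ℝ) :=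
    ae_restrict_mem measurableSet_Ioi
  -- integrability of exp(-(s x)) * p x
  have hexpm : AEStronglyMeasurable (fun x => Real.exp (-(s*x)) * p x)
      (volume.restrict (Ioi (0:ℝ))) :=
    ((Real.continuous_exp.comp ((continuous_const.mul continuous_id).neg)).aestronglyMeasurable).mul hpm
  have hexp : IntegrableOn (fun x => Real.exp (-(s*x)) * p x) (Ioi 0) := by
    refine Integrable.mono' hpint.abs hexpm ?_
    filter_upwards [hmem] with x hx
    have hx0 : (0:ℝ) < x := hx
    have : Real.exp (-(s*x)) ≤ 1 :=
      Real.exp_le_one_iff.mpr (by nlinarith)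
    rw [norm_mul, Real.norm_eq_abs, Real.norm_eq_abs,
      abs_of_nonneg (Real.exp_nonneg _)]
    nlinarith [abs_nonneg (p x), Real.exp_nonneg (-(s*x))]
  -- integrability of x * p x
  have hxm : AEStronglyMeasurable (fun x => x * p x)
      (volume.restrict (Ioi (0:ℝ))) :=
    (continuous_id.aestronglyMeasurable).mul hpm
  have hxint : IntegrableOn (fun x => x * p x) (Ioi 0) := by
    refine Integrable.mono' (hpint.abs.add hpmom.abs) hxm ?_
    filter_upwards [hmem] with x hx
    have hx0 : (0:ℝ) < x := hx
    show ‖x * p x‖ ≤ |p x| + |x ^ α * p x|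
    have hle : x ≤ 1 + x ^ α := by
      rcases le_or_gt x 1 with h | h
      · have : 0 ≤ x ^ α := Real.rpow_nonneg hx0.le α
        linarith
      · have : x ≤ x ^ α := by
          calc x = x ^ (1:ℝ) := (Real.rpow_one x).symm
            _ ≤ x ^ α := Real.rpow_le_rpow_of_exponent_le h.le hα1.le
        linarith
    rw [norm_mul, Real.norm_eq_abs, Real.norm_eq_abs, abs_of_nonneg hx0.le, abs_mul,
      abs_of_nonneg (Real.rpow_nonneg hx0.le α)]
    nlinarith [abs_nonneg (p x), Real.rpow_nonneg hx0.le α]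
  -- integrability of f * p
  have heq : (fun x => (Real.exp (-(s*x)) - 1 + s*x) * p x)
      = fun x => (Real.exp (-(s*x)) * p x - p x) + s * (x * p x) := by
    funext x; ring
  have hsub : IntegrableOn (fun x => Real.exp (-(s*x)) * p x - p x) (Ioi 0) :=
    hexp.sub hpint
  have hconst : IntegrableOn (fun x => s * (x * p x)) (Ioi 0) := hxint.const_mul s
  have hfint : IntegrableOn (fun x => (Real.exp (-(s*x)) - 1 + s*x) * p x) (Ioi 0) := by
    rw [heq]; exact hsub.add hconst
  constructor
  · rw [heq, integral_add hsub hconst, integral_sub hexp hpint, integral_const_mul]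
    rfl
  · have h1 : |∫ x in Ioi (0:ℝ), (Real.exp (-(s*x)) - 1 + s*x) * p x|
        ≤ ∫ x in Ioi (0:ℝ), |(Real.exp (-(s*x)) - 1 + s*x) * p x| :=
      by simpa only [Real.norm_eq_abs] using
        norm_integral_le_integral_norm (μ := volume.restrict (Ioi (0:ℝ)))
          (fun x => (Real.exp (-(s*x)) - 1 + s*x) * p x)
    have h2 : (∫ x in Ioi (0:ℝ), |(Real.exp (-(s*x)) - 1 + s*x) * p x|)
        ≤ ∫ x in Ioi (0:ℝ), s ^ α * (x ^ α * p x) := by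
      refine integral_mono_ae hfint.abs (hpmom.const_mul (s ^ α)) ?_
      filter_upwards [hmem, hppos] with x hx hpx
      have hx0 : (0:ℝ) < x := hx
      have hkey : |Real.exp (-(s*x)) - 1 + s*x| ≤ (s*x) ^ α :=
        key_ineq hα1.le hα2.le (mul_nonneg hs.le hx0.le)
      have hmul : (s*x) ^ α = s ^ α * x ^ α := Real.mul_rpow hs.le hx0.le
      rw [abs_mul, abs_of_nonneg hpx]
      calc |Real.exp (-(s*x)) - 1 + s*x| * p x ≤ (s ^ α * x ^ α) * p x := by
            apply mul_le_mul_of_nonneg_right _ hpx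
            rw [← hmul]; exact hkey
        _ = s ^ α * (x ^ α * p x) := by ring
    rw [integral_const_mul] at h2
    linarith

theorem d_alpha_finite (α w : ℝ) (hα1 : 1 < α) (hα2 : α < 2) (hw : 0 < w)
    (p q : ℝ → ℝ)
    (hpint : IntegrableOn p (Ioi 0)) (hqint : IntegrableOn q (Ioi 0))
    (hppos : ∀ᵐ x ∂(volume.restrict (Ioi (0:ℝ))), 0 ≤ p x)
    (hqpos : ∀ᵐ x ∂(volume.restrict (Ioi (0:ℝ))), 0 ≤ q x)
    (hpone : ∫ x in Ioi (0:ℝ), p x = 1) (hqone : ∫ x in Ioi (0:ℝ), q x = 1)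
    (hpmom : IntegrableOn (fun x => x ^ α * p x) (Ioi 0))
    (hqmom : IntegrableOn (fun x => x ^ α * q x) (Ioi 0))
    (hpmean : ∫ x in Ioi (0:ℝ), x * p x = w)
    (hqmean : ∫ x in Ioi (0:ℝ), x * q x = w) :
    ∃ B : ℝ, ∀ s : ℝ, 0 < s → |laplace p s - laplace q s| / s ^ α ≤ B := by
  refine ⟨(∫ x in Ioi (0:ℝ), x ^ α * p x) + (∫ x in Ioi (0:ℝ), x ^ α * q x),
    fun s hs => ?_⟩
  obtain ⟨hpeq, hpbd⟩ := aux_density α s hα1 hα2 hs p hpint hppos hpmom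
  obtain ⟨hqeq, hqbd⟩ := aux_density α s hα1 hα2 hs q hqint hqpos hqmom
  rw [hpone, hpmean] at hpeq
  rw [hqone, hqmean] at hqeq
  have hdiff : laplace p s - laplace q s
      = (∫ x in Ioi (0:ℝ), (Real.exp (-(s*x)) - 1 + s*x) * p x)
        - (∫ x in Ioi (0:ℝ), (Real.exp (-(s*x)) - 1 + s*x) * q x) := by
    rw [hpeq, hqeq]; ring
  have hspos : (0:ℝ) < s ^ α := Real.rpow_pos_of_pos hs α
  rw [div_le_iff₀ hspos, hdiff]
  calc |(∫ x in Ioi (0:ℝ), (Real.exp (-(s*x)) - 1 + s*x) * p x)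
        - (∫ x in Ioi (0:ℝ), (Real.exp (-(s*x)) - 1 + s*x) * q x)|
      ≤ |∫ x in Ioi (0:ℝ), (Real.exp (-(s*x)) - 1 + s*x) * p x|
        + |∫ x in Ioi (0:ℝ), (Real.exp (-(s*x)) - 1 + s*x) * q x| := abs_sub _ _
    _ ≤ s ^ α * (∫ x in Ioi (0:ℝ), x ^ α * p x)
        + s ^ α * (∫ x in Ioi (0:ℝ), x ^ α * q x) := add_le_add hpbd hqbd
    _ = ((∫ x in Ioi (0:ℝ), x ^ α * p x) + (∫ x in Ioi (0:ℝ), x ^ α * q x)) * s ^ α := by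
        ring
end
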